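/- Let M : 𝕋 → SL(2,ℝ) be continuous of degree k, and suppose A⁽¹⁾, A⁽²⁾ : 𝕋 → SL(2,ℝ) are continuous, homotopic to the identity, and satisfy M(x+α)⁻¹ A⁽²⁾(x) M(x) = A⁽¹⁾(x). Then the fibered rotation numbers satisfy ρ(α, A⁽¹⁾) = ρ(α, A⁽²⁾) − kα/2 (mod ℤ). -/

import Mathlib

open Real

/-- Rotation matrix `R_θ`, rotation by angle `2πθ`. -/
noncomputable def Rot (θ : ℝ) : Matrix (Fin 2) (Fin 2) ℝ :=
  !![Real.cos (2 * π * θ), -Real.sin (2 * π * θ);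
     Real.sin (2 * π * θ),  Real.cos (2 * π * θ)]

/-- `φ` is a (continuous, doubly periodic) lift of the projective action of `A`,
with positive radial component `v`. -/
def IsLift (A : ℝ → Matrix (Fin 2) (Fin 2) ℝ) (φ v : ℝ → ℝ → ℝ) : Prop :=
  Continuous (fun p : ℝ × ℝ => φ p.1 p.2) ∧
  (∀ x y, φ (x + 1) y = φ x y ∧ φ x (y + 1) = φ x y) ∧
  (∀ x y, 0 < v x y) ∧
  ∀ x y, (A x).mulVec ![Real.cos (2 * π * y), Real.sin (2 * π * y)] =
    v x y • ![Real.cos (2 * π * (y + φ x y)), Real.sin (2 * π * (y + φ x y))]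

/-- Iterates of the lifted fibered dynamics `(x, y) ↦ (x + α, y + φ(x,y))`, second
coordinate. -/
noncomputable def liftIter (α : ℝ) (φ : ℝ → ℝ → ℝ) (x y : ℝ) : ℕ → ℝ
  | 0 => y
  | n + 1 => liftIter α φ x y n + φ (x + n * α) (liftIter α φ x y n)

/-- `ρ` is the fibered rotation number of the cocycle `(α, A)` (for `A` homotopic to the
identity): the asymptotic average rotation of the lifted projective dynamics. -/
def IsFiberedRotNum (α : ℝ) (A : ℝ → Matrix (Fin 2) (Fin 2) ℝ) (ρ : ℝ) : Prop :=
  ∃ φ v : ℝ → ℝ → ℝ, IsLift A φ v ∧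
    ∀ x y : ℝ, Filter.Tendsto (fun n : ℕ => (liftIter α φ x y n - y) / n)
      Filter.atTop (nhds ρ)

/-- `A` is homotopic to the identity through continuous periodic `SL(2,ℝ)`-valued maps. -/
def HtpyToId (A : ℝ → Matrix (Fin 2) (Fin 2) ℝ) : Prop :=
  ∃ H : ℝ → ℝ → Matrix (Fin 2) (Fin 2) ℝ,
    Continuous (fun p : ℝ × ℝ => H p.1 p.2) ∧
    (∀ t x, (H t x).det = 1 ∧ H t (x + 1) = H t x) ∧
    (∀ x, H 0 x = A x ∧ H 1 x = 1)

/-- `M` has degree `k`: it is homotopic, through continuous `SL(2,ℝ)`-valued maps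
periodic up to sign, to `x ↦ R_{kx/2}`. -/
def HasDegree (M : ℝ → Matrix (Fin 2) (Fin 2) ℝ) (k : ℤ) : Prop :=
  ∃ H : ℝ → ℝ → Matrix (Fin 2) (Fin 2) ℝ,
    Continuous (fun p : ℝ × ℝ => H p.1 p.2) ∧
    (∀ t x, (H t x).det = 1 ∧ (H t (x + 1) = H t x ∨ H t (x + 1) = -(H t x))) ∧
    (∀ x, H 0 x = M x ∧ H 1 x = Rot ((k : ℝ) * x / 2))

/-!
Lift the homotopy `H` from `M` to `x ↦ R_{kx/2}` to an angle function: the map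
`(t, x, y) ↦ H t x · u(y)`, with `u(y) = (cos 2πy, sin 2πy)`, never vanishes on the simply
connected space `ℝ³`, so it lifts through `exp` and equals `w(t,x,y) · u(Θ(t,x,y))` with `w > 0`
and `Θ` continuous.
The defects `Θ(t,x,y+1) - Θ(t,x,y) ∈ ℤ` and `Θ(t,x+1,y) - Θ(t,x,y) ∈ ½ℤ` are continuous, hence
constant, and at `t = 1`, where `H` is an explicit rotation, they are `1` and `k/2`. So
`θ = Θ(0, ·, ·)` lifts the projective action of `M` and `θ(x,y) - y - kx/2` is bounded.
The relation `A₂(x) M(x) = M(x+α) A₁(x)` makes `θ` intertwine the lifted dynamics of `A₁` and `A₂`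
up to a fixed integer `N`; after `n` steps the orbits therefore differ by `n(kα/2 - N) + O(1)`, and
dividing by `n` gives `ρ₂ = ρ₁ + kα/2 - N`.
-/

open Filter Topology Matrix

lemma exists_int_forall_eq_add {X : Type*} [TopologicalSpace X] [PreconnectedSpace X]
    {f g : X → ℝ} (hf : Continuous f) (hg : Continuous g) (h : ∀ p, ∃ n : ℤ, f p = g p + n) :
    ∃ n : ℤ, ∀ p, f p = g p + n := by
  rcases isEmpty_or_nonempty X with hX | ⟨⟨p₀⟩⟩
  · exact ⟨0, fun p => isEmptyElim p⟩
  obtain ⟨n, hn⟩ := h p₀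
  refine ⟨n, fun p => ?_⟩
  have hconst : f p - g p = f p₀ - g p₀ :=
    isPreconnected_univ.constant_of_mapsTo
      Int.isClosedEmbedding_coe_real.isInducing.isDiscrete_range (hf.sub hg).continuousOn
      (fun q _ => (h q).imp fun m hm => by simp [hm]) (Set.mem_univ p) (Set.mem_univ p₀)
  linarith

lemma exists_abs_le_of_periodic_prod {f : ℝ × ℝ → ℝ} (hf : Continuous f)
    (h₁ : ∀ x y, f (x + 1, y) = f (x, y)) (h₂ : ∀ x y, f (x, y + 1) = f (x, y)) :
    ∃ C, ∀ x y, |f (x, y)| ≤ C := by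
  have hK : IsCompact (Set.Icc ((0 : ℝ), (0 : ℝ)) (1, 1)) := isCompact_Icc
  obtain ⟨C, hC⟩ := hK.exists_bound_of_continuousOn hf.continuousOn
  refine ⟨C, fun x y => ?_⟩
  obtain ⟨x', hx', hxx'⟩ := Function.Periodic.exists_mem_Ico₀ (f := fun s => f (s, y))
    (fun s => h₁ s y) one_pos x
  obtain ⟨y', hy', hyy'⟩ := Function.Periodic.exists_mem_Ico₀ (f := fun s => f (x', s))
    (fun s => h₂ x' s) one_pos y
  have := hC (x', y') ⟨⟨hx'.1, hy'.1⟩, ⟨hx'.2.le, hy'.2.le⟩⟩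
  rwa [Real.norm_eq_abs, ← hyy', ← hxx'] at this

lemma eq_add_of_tendsto_div_of_bounded {a b : ℕ → ℝ} {ρa ρb c C : ℝ}
    (ha : Tendsto (fun n : ℕ => a n / n) atTop (𝓝 ρa))
    (hb : Tendsto (fun n : ℕ => b n / n) atTop (𝓝 ρb)) (hC : ∀ n : ℕ, |b n - a n - n * c| ≤ C) :
    ρb = ρa + c := by
  have herr : Tendsto (fun n : ℕ => (b n - a n - n * c) / n) atTop (𝓝 0) := by
    refine squeeze_zero_norm (fun n => ?_) (tendsto_const_div_atTop_nhds_zero_nat C)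
    rw [Real.norm_eq_abs, abs_div, Nat.abs_cast]
    exact div_le_div_of_nonneg_right (hC n) n.cast_nonneg
  have hsplit : ∀ᶠ n : ℕ in atTop, (b n - a n - n * c) / n = b n / n - a n / n - c := by
    filter_upwards [eventually_ne_atTop 0] with n hn
    field_simp
  have := tendsto_nhds_unique (herr.congr' hsplit) ((hb.sub ha).sub tendsto_const_nhds)
  linarith

lemma liftIter_semiconj {α : ℝ} {φ₁ φ₂ h : ℝ → ℝ → ℝ} {N : ℤ}
    (hφ₂ : ∀ x y, φ₂ x (y + 1) = φ₂ x y)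
    (hh : ∀ x y, h (x + α) (y + φ₁ x y) = h x y + φ₂ x (h x y) + N) (x y : ℝ) (n : ℕ) :
    liftIter α φ₂ x (h x y) n = h (x + n * α) (liftIter α φ₁ x y n) - n * N := by
  induction n with
  | zero => simp [liftIter]
  | succ n ih =>
    have hshift : φ₂ (x + n * α) (h (x + n * α) (liftIter α φ₁ x y n) - n * N) =
        φ₂ (x + n * α) (h (x + n * α) (liftIter α φ₁ x y n)) := by
      simpa using (Function.Periodic.sub_int_mul_eq (fun s => hφ₂ (x + n * α) s) (n * N)
        (x := h (x + n * α) (liftIter α φ₁ x y n)))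
    rw [liftIter, liftIter, ih, hshift, show x + (n + 1 : ℕ) * α = x + n * α + α by push_cast; ring,
      hh]
    push_cast
    ring

noncomputable def unitVec (a : ℝ) : Fin 2 → ℝ := ![cos (2 * π * a), sin (2 * π * a)]

noncomputable def toComplex (v : Fin 2 → ℝ) : ℂ := v 0 + v 1 * Complex.I

lemma toComplex_injective : Function.Injective toComplex := by
  intro v w h
  have hre := congrArg Complex.re h
  have him := congrArg Complex.im h
  simp only [toComplex, Complex.add_re, Complex.ofReal_re, Complex.mul_re, Complex.I_re,
    Complex.ofReal_im, Complex.I_im, Complex.add_im, Complex.mul_im] at hre him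
  ext i
  fin_cases i <;> simp <;> linarith

lemma continuous_toComplex : Continuous toComplex := by
  unfold toComplex; fun_prop

lemma toComplex_smul (r : ℝ) (v : Fin 2 → ℝ) : toComplex (r • v) = r * toComplex v := by
  simp only [toComplex, Pi.smul_apply, smul_eq_mul, Complex.ofReal_mul]; ring

lemma toComplex_unitVec (a : ℝ) :
    toComplex (unitVec a) = Complex.exp ((2 * π * a : ℝ) * Complex.I) := by
  simp [toComplex, unitVec, Complex.exp_mul_I, Complex.ofReal_cos, Complex.ofReal_sin]

lemma continuous_unitVec : Continuous unitVec := by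
  unfold unitVec; fun_prop

lemma unitVec_ne_zero (a : ℝ) : unitVec a ≠ 0 := by
  intro h
  have h0 : cos (2 * π * a) = 0 := congrFun h 0
  have h1 : sin (2 * π * a) = 0 := congrFun h 1
  simpa [h0, h1] using sin_sq_add_cos_sq (2 * π * a)

lemma unitVec_add_one (a : ℝ) : unitVec (a + 1) = unitVec a := by
  simp only [unitVec, mul_add, mul_one, cos_add_two_pi, sin_add_two_pi]

lemma unitVec_add_half (a : ℝ) : unitVec (a + 1 / 2) = -unitVec a := by
  have h : 2 * π * (a + 1 / 2) = 2 * π * a + π := by ring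
  rw [unitVec, unitVec, h, cos_add_pi, sin_add_pi]
  ext i; fin_cases i <;> simp

lemma rot_mulVec_unitVec (θ y : ℝ) : Rot θ *ᵥ unitVec y = unitVec (y + θ) := by
  have h : 2 * π * (y + θ) = 2 * π * θ + 2 * π * y := by ring
  ext i; fin_cases i <;>
    simp [Rot, unitVec, mulVec, dotProduct, Fin.sum_univ_two, h, cos_add, sin_add, sub_eq_add_neg]

def IsAngleOf (v : Fin 2 → ℝ) (a : ℝ) : Prop := ∃ w : ℝ, 0 < w ∧ v = w • unitVec a

lemma isAngleOf_unitVec (a : ℝ) : IsAngleOf (unitVec a) a := ⟨1, one_pos, (one_smul ℝ _).symm⟩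

namespace IsAngleOf

lemma smul {v : Fin 2 → ℝ} {a r : ℝ} (h : IsAngleOf v a) (hr : 0 < r) : IsAngleOf (r • v) a := by
  obtain ⟨w, hw, rfl⟩ := h
  exact ⟨r * w, mul_pos hr hw, smul_smul r w _⟩

lemma neg {v : Fin 2 → ℝ} {a : ℝ} (h : IsAngleOf v a) : IsAngleOf (-v) (a + 1 / 2) := by
  obtain ⟨w, hw, rfl⟩ := h
  exact ⟨w, hw, by rw [unitVec_add_half, smul_neg]⟩

lemma mulVec {B : Matrix (Fin 2) (Fin 2) ℝ} {v : Fin 2 → ℝ} {a b : ℝ}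
    (hB : IsAngleOf (B *ᵥ unitVec a) b) (hv : IsAngleOf v a) : IsAngleOf (B *ᵥ v) b := by
  obtain ⟨w, hw, rfl⟩ := hv
  rw [Matrix.mulVec_smul]
  exact hB.smul hw

lemma eq_add_int {v : Fin 2 → ℝ} {a b : ℝ} (ha : IsAngleOf v a) (hb : IsAngleOf v b) :
    ∃ n : ℤ, a = b + n := by
  obtain ⟨r, hr, rfl⟩ := ha
  obtain ⟨s, hs, hrs⟩ := hb
  have hC := congrArg toComplex hrs
  rw [toComplex_smul, toComplex_smul, toComplex_unitVec, toComplex_unitVec] at hC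
  have hnorm := congrArg norm hC
  simp only [norm_mul, Complex.norm_exp_ofReal_mul_I, Complex.norm_real, Real.norm_eq_abs,
    mul_one, abs_of_pos hr, abs_of_pos hs] at hnorm
  rw [hnorm] at hC
  obtain ⟨n, hn⟩ := Complex.exp_eq_exp_iff_exists_int.mp
    (mul_left_cancel₀ (Complex.ofReal_ne_zero.mpr hs.ne') hC)
  refine ⟨n, mul_left_cancel₀ (by positivity : 2 * π ≠ 0) ?_⟩
  have him := congrArg Complex.im hn
  simp at him
  linarith

end IsAngleOf

lemma IsLift.isAngleOf {A : ℝ → Matrix (Fin 2) (Fin 2) ℝ} {φ v : ℝ → ℝ → ℝ} (h : IsLift A φ v)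
    (x y : ℝ) : IsAngleOf (A x *ᵥ unitVec y) (y + φ x y) :=
  ⟨v x y, h.2.2.1 x y, h.2.2.2 x y⟩

theorem exists_continuous_angle {X : Type*} [TopologicalSpace X] [SimplyConnectedSpace X]
    [LocallyPathConnectedSpace X] {G : X → Fin 2 → ℝ} (hG : Continuous G) (hG0 : ∀ p, G p ≠ 0) :
    ∃ Θ : X → ℝ, Continuous Θ ∧ ∀ p, IsAngleOf (G p) (Θ p) := by
  obtain ⟨p₀⟩ := (inferInstance : Nonempty X)
  have hF0 : ∀ p, toComplex (G p) ≠ 0 := fun p h =>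
    hG0 p (toComplex_injective (h.trans (by simp [toComplex])))
  obtain ⟨L, ⟨-, hL⟩, -⟩ := Complex.isCoveringMapOn_exp.existsUnique_continuousMap_lifts
    ⟨_, continuous_toComplex.comp hG⟩ (Complex.exp_log (hF0 p₀)) hF0
  refine ⟨fun p => (L p).im / (2 * π), by fun_prop,
    fun p => ⟨Real.exp (L p).re, Real.exp_pos _, ?_⟩⟩
  apply toComplex_injective
  have hLp : Complex.exp (L p) = toComplex (G p) := congrFun hL p
  rw [toComplex_smul, toComplex_unitVec, ← hLp, Complex.ofReal_exp, ← Complex.exp_add]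
  congr 1
  conv_lhs => rw [← Complex.re_add_im (L p)]
  congr 2
  push_cast
  field_simp

section HomotopyAngle

variable {H : ℝ → ℝ → Matrix (Fin 2) (Fin 2) ℝ} {Θ : ℝ × ℝ × ℝ → ℝ} {k m : ℤ}

lemma exists_int_angle_eq_of_eq_rot (hΘ : Continuous Θ)
    (hH : ∀ t x y, IsAngleOf (H t x *ᵥ unitVec y) (Θ (t, x, y)))
    (hH₁ : ∀ x, H 1 x = Rot (k * x / 2)) :
    ∃ m : ℤ, ∀ x y, Θ (1, x, y) = y + k * x / 2 + m := by
  obtain ⟨m, hm⟩ := exists_int_forall_eq_add (f := fun q : ℝ × ℝ => Θ (1, q.1, q.2))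
    (g := fun q => q.2 + k * q.1 / 2) (by fun_prop) (by fun_prop) fun q =>
      (hH 1 q.1 q.2).eq_add_int (by rw [hH₁, rot_mulVec_unitVec]; exact isAngleOf_unitVec _)
  exact ⟨m, fun x y => hm (x, y)⟩

lemma angle_add_one_right (hΘ : Continuous Θ)
    (hH : ∀ t x y, IsAngleOf (H t x *ᵥ unitVec y) (Θ (t, x, y)))
    (hm : ∀ x y, Θ (1, x, y) = y + k * x / 2 + m) (t x y : ℝ) :
    Θ (t, x, y + 1) = Θ (t, x, y) + 1 := by
  obtain ⟨n, hn⟩ := exists_int_forall_eq_add (f := fun p => Θ (p.1, p.2.1, p.2.2 + 1)) (g := Θ)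
    (by fun_prop) hΘ fun p =>
      (hH p.1 p.2.1 (p.2.2 + 1)).eq_add_int (by rw [unitVec_add_one]; exact hH p.1 p.2.1 p.2.2)
  have hn1 : (n : ℝ) = 1 := by
    have := hn (1, 0, 0)
    simp only [hm] at this
    linarith
  simpa [hn1] using hn (t, x, y)

lemma angle_add_one_left (hΘ : Continuous Θ)
    (hH : ∀ t x y, IsAngleOf (H t x *ᵥ unitVec y) (Θ (t, x, y)))
    (hper : ∀ t x, H t (x + 1) = H t x ∨ H t (x + 1) = -H t x)
    (hm : ∀ x y, Θ (1, x, y) = y + k * x / 2 + m) (t x y : ℝ) :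
    Θ (t, x + 1, y) = Θ (t, x, y) + k / 2 := by
  -- `H t` is periodic only up to sign, which shifts angles by `1/2`.
  have hpoint (p : ℝ × ℝ × ℝ) : ∃ n : ℤ, 2 * Θ (p.1, p.2.1 + 1, p.2.2) = 2 * Θ p + n := by
    obtain ⟨t, x, y⟩ := p
    rcases hper t x with h | h
    · obtain ⟨n, hn⟩ := (hH t (x + 1) y).eq_add_int (by rw [h]; exact hH t x y)
      exact ⟨2 * n, by push_cast; linarith⟩
    · obtain ⟨n, hn⟩ := (hH t (x + 1) y).eq_add_int (by rw [h, neg_mulVec]; exact (hH t x y).neg)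
      exact ⟨2 * n + 1, by push_cast; linarith⟩
  obtain ⟨n, hn⟩ := exists_int_forall_eq_add (by fun_prop) (by fun_prop) hpoint
  have hnk : (n : ℝ) = k := by
    have := hn (1, 0, 0)
    simp only [hm] at this
    linarith
  linarith [hn (t, x, y)]

end HomotopyAngle

theorem HasDegree.exists_angle_lift {M : ℝ → Matrix (Fin 2) (Fin 2) ℝ} {k : ℤ}
    (hM : HasDegree M k) :
    ∃ θ : ℝ → ℝ → ℝ, Continuous (fun q : ℝ × ℝ => θ q.1 q.2) ∧
      (∀ x y, IsAngleOf (M x *ᵥ unitVec y) (θ x y)) ∧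
      (∀ x y, θ (x + 1) y = θ x y + k / 2) ∧ ∀ x y, θ x (y + 1) = θ x y + 1 := by
  obtain ⟨H, hHc, hH, hHends⟩ := hM
  have hG : Continuous fun p : ℝ × ℝ × ℝ => H p.1 p.2.1 *ᵥ unitVec p.2.2 :=
    (hHc.comp (continuous_fst.prodMk (continuous_fst.comp continuous_snd))).matrix_mulVec
      (continuous_unitVec.comp (continuous_snd.comp continuous_snd))
  have hG0 (p : ℝ × ℝ × ℝ) : H p.1 p.2.1 *ᵥ unitVec p.2.2 ≠ 0 := by
    have hunit : IsUnit (H p.1 p.2.1) := by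
      rw [isUnit_iff_isUnit_det, (hH _ _).1]; exact isUnit_one
    simpa using (mulVec_injective_iff_isUnit.mpr hunit).ne (unitVec_ne_zero p.2.2)
  obtain ⟨Θ, hΘ, hΘG⟩ := exists_continuous_angle hG hG0
  have hΘH (t x y : ℝ) : IsAngleOf (H t x *ᵥ unitVec y) (Θ (t, x, y)) := hΘG (t, x, y)
  obtain ⟨m, hm⟩ := exists_int_angle_eq_of_eq_rot hΘ hΘH fun x => (hHends x).2
  refine ⟨fun x y => Θ (0, x, y), hΘ.comp (by fun_prop), fun x y => ?_,
    fun x y => angle_add_one_left hΘ hΘH (fun t x => (hH t x).2) hm 0 x y,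
    fun x y => angle_add_one_right hΘ hΘH hm 0 x y⟩
  simpa [(hHends x).1] using hΘH 0 x y

theorem exists_int_angle_semiconj {α : ℝ} {M A₁ A₂ : ℝ → Matrix (Fin 2) (Fin 2) ℝ}
    {θ φ₁ φ₂ v₁ v₂ : ℝ → ℝ → ℝ} (hθ : Continuous (fun q : ℝ × ℝ => θ q.1 q.2))
    (hθM : ∀ x y, IsAngleOf (M x *ᵥ unitVec y) (θ x y))
    (h₁ : IsLift A₁ φ₁ v₁) (h₂ : IsLift A₂ φ₂ v₂) (hAM : ∀ x, A₂ x * M x = M (x + α) * A₁ x) :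
    ∃ N : ℤ, ∀ x y, θ (x + α) (y + φ₁ x y) = θ x y + φ₂ x (θ x y) + N := by
  have hpoint (q : ℝ × ℝ) :
      ∃ n : ℤ, θ (q.1 + α) (q.2 + φ₁ q.1 q.2) = θ q.1 q.2 + φ₂ q.1 (θ q.1 q.2) + n := by
    obtain ⟨x, y⟩ := q
    have hright : IsAngleOf ((A₂ x * M x) *ᵥ unitVec y) (θ (x + α) (y + φ₁ x y)) := by
      rw [hAM, ← mulVec_mulVec]; exact (hθM _ _).mulVec (h₁.isAngleOf x y)
    have hleft : IsAngleOf ((A₂ x * M x) *ᵥ unitVec y) (θ x y + φ₂ x (θ x y)) := by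
      rw [← mulVec_mulVec]; exact (h₂.isAngleOf x _).mulVec (hθM x y)
    exact hright.eq_add_int hleft
  have hθ' : Continuous fun q : ℝ × ℝ => θ (q.1 + α) (q.2 + φ₁ q.1 q.2) :=
    hθ.comp ((continuous_fst.add continuous_const).prodMk (continuous_snd.add h₁.1))
  have hφ₂θ : Continuous fun q : ℝ × ℝ => φ₂ q.1 (θ q.1 q.2) :=
    h₂.1.comp (continuous_fst.prodMk hθ)
  obtain ⟨N, hN⟩ := exists_int_forall_eq_add hθ' (hθ.add hφ₂θ) hpoint
  exact ⟨N, fun x y => hN (x, y)⟩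

theorem stmt6_general (α : ℝ)
    (M A1 A2 : ℝ → Matrix (Fin 2) (Fin 2) ℝ) (k : ℤ)
    (hMdet : ∀ x, (M x).det = 1)
    (hdeg : HasDegree M k)
    (hconj : ∀ x, (M (x + α))⁻¹ * A2 x * M x = A1 x)
    (ρ₁ ρ₂ : ℝ) (h1 : IsFiberedRotNum α A1 ρ₁) (h2 : IsFiberedRotNum α A2 ρ₂) :
    ∃ m : ℤ, ρ₁ = ρ₂ - (k : ℝ) * α / 2 + m := by
  obtain ⟨θ, hθ, hθM, hθx, hθy⟩ := hdeg.exists_angle_lift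
  obtain ⟨φ₁, v₁, hφ₁, hρ₁⟩ := h1
  obtain ⟨φ₂, v₂, hφ₂, hρ₂⟩ := h2
  have hAM (x : ℝ) : A2 x * M x = M (x + α) * A1 x := by
    have hunit : IsUnit (M (x + α)).det := by rw [hMdet]; exact isUnit_one
    rw [← hconj, ← Matrix.mul_assoc, ← Matrix.mul_assoc, mul_nonsing_inv _ hunit, Matrix.one_mul]
  obtain ⟨N, hN⟩ := exists_int_angle_semiconj hθ hθM hφ₁ hφ₂ hAM
  obtain ⟨C, hC⟩ := exists_abs_le_of_periodic_prod (f := fun q => θ q.1 q.2 - k * q.1 / 2 - q.2)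
    (by fun_prop) (fun x y => by simp only [hθx]; ring) (fun x y => by simp only [hθy]; ring)
  have hρ := eq_add_of_tendsto_div_of_bounded (c := k * α / 2 - N) (C := C + |θ 0 0|)
    (hρ₁ 0 0) (hρ₂ 0 (θ 0 0)) fun n => by
      rw [liftIter_semiconj (fun x y => (hφ₂.2.1 x y).2) hN, zero_add]
      calc _ = |(θ (n * α) (liftIter α φ₁ 0 0 n) - k * (n * α) / 2 - liftIter α φ₁ 0 0 n)
              - θ 0 0| := by congr 1; ring
        _ ≤ C + |θ 0 0| := (abs_sub _ _).trans (add_le_add_left (hC _ _) _)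
  exact ⟨N, by linarith⟩

theorem stmt6 (α : ℝ) (hα : Irrational α)
    (M A1 A2 : ℝ → Matrix (Fin 2) (Fin 2) ℝ) (k : ℤ)
    (hMcont : Continuous M) (hMdet : ∀ x, (M x).det = 1)
    (hMper : ∀ x, M (x + 1) = M x ∨ M (x + 1) = -(M x))
    (hdeg : HasDegree M k)
    (hA1cont : Continuous A1) (hA1det : ∀ x, (A1 x).det = 1)
    (hA1per : ∀ x, A1 (x + 1) = A1 x) (hA1htpy : HtpyToId A1)
    (hA2cont : Continuous A2) (hA2det : ∀ x, (A2 x).det = 1)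
    (hA2per : ∀ x, A2 (x + 1) = A2 x) (hA2htpy : HtpyToId A2)
    (hconj : ∀ x, (M (x + α))⁻¹ * A2 x * M x = A1 x)
    (ρ₁ ρ₂ : ℝ) (h1 : IsFiberedRotNum α A1 ρ₁) (h2 : IsFiberedRotNum α A2 ρ₂) :
    ∃ m : ℤ, ρ₁ = ρ₂ - (k : ℝ) * α / 2 + m :=
  stmt6_general α M A1 A2 k hMdet hdeg hconj ρ₁ ρ₂ h1 h2
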